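/- Assume A is symmetric positive definite with condition number κ = λ_max(A)/λ_min(A). Then the aNGMRES(m, m+1) iterates from any u₀ satisfy ‖r_{j(m+1)}‖ ≤ χ(m+1)^j · ‖r₀‖ ≤ (2 ((√κ − 1)/(√κ + 1))^{m+1})^j · ‖r₀‖ for all j ≥ 1. -/

import Mathlib

open Matrix Polynomial Set

noncomputable section

/-- Matrix–vector product, landing in Euclidean space. -/
def mulVecE {n : ℕ} (M : Matrix (Fin n) (Fin n) ℝ) (v : EuclideanSpace ℝ (Fin n)) :
    EuclideanSpace ℝ (Fin n) :=
  WithLp.toLp 2 (M.mulVec v)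

/-- Residual `r(u) = A u - b`. -/
def res {n : ℕ} (A : Matrix (Fin n) (Fin n) ℝ) (b u : EuclideanSpace ℝ (Fin n)) :
    EuclideanSpace ℝ (Fin n) :=
  mulVecE A u - b

/-- Richardson fixed-point map `q(u) = (I - A) u + b = M u + b` with `M = I - A`. -/
def fp {n : ℕ} (A : Matrix (Fin n) (Fin n) ℝ) (b u : EuclideanSpace ℝ (Fin n)) :
    EuclideanSpace ℝ (Fin n) :=
  mulVecE (1 - A) u + b

/-- The NGMRES(m) least-squares objective at step `k`:
`β ↦ ‖r(q(u_k)) + Σ_{i=0}^m β_i (r(q(u_k)) - r(u_{k-i}))‖`. -/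
def ngObj {n : ℕ} (A : Matrix (Fin n) (Fin n) ℝ) (b : EuclideanSpace ℝ (Fin n))
    (m : ℕ) (prev : ℕ → EuclideanSpace ℝ (Fin n)) (k : ℕ) (β : Fin (m+1) → ℝ) : ℝ :=
  ‖res A b (fp A b (prev k)) +
    ∑ i : Fin (m+1), β i • (res A b (fp A b (prev k)) - res A b (prev (k - (i : ℕ))))‖

/-- `next` is produced from `prev (k-m), …, prev k` by a single NGMRES(m) step:
`next = q(u_k) + Σ_{i=0}^m β_i (q(u_k) - u_{k-i})` where `β` minimizes the
least-squares objective `ngObj`. -/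
def NGMRESStep {n : ℕ} (A : Matrix (Fin n) (Fin n) ℝ) (b : EuclideanSpace ℝ (Fin n))
    (m : ℕ) (prev : ℕ → EuclideanSpace ℝ (Fin n)) (k : ℕ)
    (next : EuclideanSpace ℝ (Fin n)) : Prop :=
  ∃ β : Fin (m+1) → ℝ,
    (∀ γ : Fin (m+1) → ℝ, ngObj A b m prev k β ≤ ngObj A b m prev k γ) ∧
    next = fp A b (prev k) +
      ∑ i : Fin (m+1), β i • (fp A b (prev k) - prev (k - (i : ℕ)))

/-- The spectral (ℓ²-operator) norm of a matrix. -/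
def opNorm {n : ℕ} (M : Matrix (Fin n) (Fin n) ℝ) : ℝ :=
  ‖(Matrix.toEuclideanCLM (𝕜 := ℝ) M : EuclideanSpace ℝ (Fin n) →L[ℝ] EuclideanSpace ℝ (Fin n))‖

/-- The 2-norm condition number `κ₂(U) = ‖U‖ ‖U⁻¹‖`. -/
def condNum {n : ℕ} (U : Matrix (Fin n) (Fin n) ℝ) : ℝ :=
  opNorm U * opNorm U⁻¹

/-- `ε(a,b,s)`: minimum over real polynomials `p` of degree at most `s` with `p(1) = 1`
of `max_{t ∈ [1/b, 1/a]} |p(t)|`. -/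
def eps (a b : ℝ) (s : ℕ) : ℝ :=
  sInf {t : ℝ | ∃ p : Polynomial ℝ, p.natDegree ≤ s ∧ p.eval 1 = 1 ∧
    t = sSup ((fun x => |p.eval x|) '' Set.Icc (1/b) (1/a))}

/-- `χ(s)`: minimum over real polynomials `p` of degree at most `s` with `p(1) = 1`
of `max_{λ ∈ Σ(M)} |p(λ)|`, where `Σ(M)` is the set of eigenvalues of `M`. -/
def chiSp {n : ℕ} (M : Matrix (Fin n) (Fin n) ℝ) (s : ℕ) : ℝ :=
  sInf {t : ℝ | ∃ p : Polynomial ℝ, p.natDegree ≤ s ∧ p.eval 1 = 1 ∧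
    t = sSup ((fun x => |p.eval x|) '' spectrum ℝ M)}

/-- The Krylov subspace `K_k(A, r) = span{r, Ar, …, A^{k-1} r}`. -/
def Krylov {n : ℕ} (A : Matrix (Fin n) (Fin n) ℝ) (r : EuclideanSpace ℝ (Fin n)) (k : ℕ) :
    Submodule ℝ (EuclideanSpace ℝ (Fin n)) :=
  Submodule.span ℝ (Set.range fun i : Fin k => mulVecE (A ^ (i : ℕ)) r)

/-- The matrix `S_k = [u_{k-m+1}-u_{k-m}, …, u_k-u_{k-1}, q(u_k)-u_k] ∈ ℝ^{n×(m+1)}`. -/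
def Smat {n : ℕ} (A : Matrix (Fin n) (Fin n) ℝ) (b : EuclideanSpace ℝ (Fin n))
    (prev : ℕ → EuclideanSpace ℝ (Fin n)) (k m : ℕ) :
    Matrix (Fin n) (Fin (m+1)) ℝ :=
  Matrix.of fun r c =>
    if (c : ℕ) < m then prev (k - m + c + 1) r - prev (k - m + c) r
    else fp A b (prev k) r - prev k r

/-- `u` is the sequence of aNGMRES(m, p) iterates (with `m = ⊤` giving aNGMRES(∞, p)):
if `p ∤ k` then `u_k = q(u_{k-1})`, and if `p ∣ k` then `u_k` is produced by one
NGMRES(min(m, k-1)) step from `u_{k-1-m_k}, …, u_{k-1}`. -/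
def aNGMRES {n : ℕ} (A : Matrix (Fin n) (Fin n) ℝ) (b : EuclideanSpace ℝ (Fin n))
    (m : ℕ∞) (p : ℕ) (u : ℕ → EuclideanSpace ℝ (Fin n)) : Prop :=
  ∀ k, 1 ≤ k →
    (¬ p ∣ k → u k = fp A b (u (k-1))) ∧
    (p ∣ k → NGMRESStep A b (min m ((k : ℕ∞) - 1)).toNat u (k-1) (u k))

/-! Inside a block of `m + 1` steps the iterates are Richardson steps, so with `M = 1 - A`
the residuals are `r_{K+i} = Mⁱ r_K`. The NGMRES step that closes the block minimises over
the affine combinations of `r_K, M r_K, …, M^{m+1} r_K`, that is over `p(M) r_K` with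
`deg p ≤ m + 1` and `p(1) = 1`. For symmetric `M` the norm of `p(M)` is the largest value of
`|p|` on the spectrum, so each block contracts the residual by `χ(m+1)`. Transplanting the
Chebyshev polynomial `T_{m+1}` from `[-1, 1]` to `[λ_min, λ_max]` bounds `χ(m+1)` by
`2 ((√κ - 1)/(√κ + 1))^{m+1}`. -/

open Finset

section Residual

variable {n : ℕ} (A : Matrix (Fin n) (Fin n) ℝ) (b : EuclideanSpace ℝ (Fin n))

lemma mulVecE_eq_toEuclideanCLM (M : Matrix (Fin n) (Fin n) ℝ) (v : EuclideanSpace ℝ (Fin n)) :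
    mulVecE M v = toEuclideanCLM (𝕜 := ℝ) M v :=
  rfl

lemma mulVecE_mul (M N : Matrix (Fin n) (Fin n) ℝ) (v : EuclideanSpace ℝ (Fin n)) :
    mulVecE (M * N) v = mulVecE M (mulVecE N v) := by
  simp only [mulVecE_eq_toEuclideanCLM, map_mul, mul_apply_eq_comp]

lemma res_fp (v : EuclideanSpace ℝ (Fin n)) :
    res A b (fp A b v) = mulVecE (1 - A) (res A b v) := by
  simp only [res, fp, mulVecE_eq_toEuclideanCLM, map_sub, map_one, map_add,
    _root_.sub_apply, one_apply_eq_self]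
  abel

lemma res_iterate_fp (v : EuclideanSpace ℝ (Fin n)) (i : ℕ) :
    res A b ((fp A b)^[i] v) = mulVecE ((1 - A) ^ i) (res A b v) := by
  induction i with
  | zero => simp [mulVecE_eq_toEuclideanCLM]
  | succ i ih => rw [Function.iterate_succ_apply', res_fp, ih, pow_succ', mulVecE_mul]

lemma res_add_sum_smul_sub {ι : Type*} [Fintype ι] (β : ι → ℝ)
    (x : EuclideanSpace ℝ (Fin n)) (y : ι → EuclideanSpace ℝ (Fin n)) :
    res A b (x + ∑ i, β i • (x - y i)) = res A b x + ∑ i, β i • (res A b x - res A b (y i)) := by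
  simp only [res, mulVecE_eq_toEuclideanCLM, map_add, map_sum, map_smul, map_sub,
    sub_sub_sub_cancel_right]
  abel

theorem NGMRESStep.norm_res_le {m k : ℕ} {prev : ℕ → EuclideanSpace ℝ (Fin n)}
    {next : EuclideanSpace ℝ (Fin n)} (h : NGMRESStep A b m prev k next) (γ : Fin (m + 1) → ℝ) :
    ‖res A b next‖ ≤ ngObj A b m prev k γ := by
  obtain ⟨β, hβ, rfl⟩ := h
  rw [res_add_sum_smul_sub]
  exact hβ γ

end Residual

theorem add_sum_smul_sub_eq_sum_range {R V : Type*} [CommRing R] [AddCommGroup V] [Module R V]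
    (w : ℕ → V) (c : ℕ → R) (m : ℕ) (hc : ∑ s ∈ range (m + 2), c s = 1) :
    w (m + 1) + ∑ i : Fin (m + 1), -c (m - i) • (w (m + 1) - w (m - i)) =
      ∑ s ∈ range (m + 2), c s • w s := by
  have hrev : ∀ f : ℕ → V, ∑ i : Fin (m + 1), f (m - i) = ∑ s ∈ range (m + 1), f s := fun f => by
    rw [Fin.sum_univ_eq_sum_range (fun i => f (m - i)), ← sum_range_reflect f]
    simp
  rw [sum_range_succ] at hc
  rw [hrev fun s => -c s • (w (m + 1) - w s), sum_range_succ _ (m + 1), eq_sub_of_add_eq' hc]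
  simp only [neg_smul, smul_sub, sum_neg_distrib, sum_sub_distrib, ← sum_smul, sub_smul, one_smul]
  abel

section Iterates

variable {n : ℕ} {A : Matrix (Fin n) (Fin n) ℝ} {b : EuclideanSpace ℝ (Fin n)}

lemma mulVecE_aeval_eq_sum_range {p : ℝ[X]} {N : ℕ} (hp : p.natDegree < N)
    (M : Matrix (Fin n) (Fin n) ℝ) (r : EuclideanSpace ℝ (Fin n)) :
    mulVecE (aeval M p) r = ∑ s ∈ range N, p.coeff s • mulVecE (M ^ s) r := by
  simp only [aeval_eq_sum_range' hp, mulVecE_eq_toEuclideanCLM, map_sum, map_smul,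
    _root_.sum_apply, _root_.smul_apply]

theorem ngObj_eq_norm_mulVecE_aeval {m K : ℕ} {prev : ℕ → EuclideanSpace ℝ (Fin n)}
    {r : EuclideanSpace ℝ (Fin n)}
    (hres : ∀ i ≤ m, res A b (prev (K + i)) = mulVecE ((1 - A) ^ i) r)
    {p : ℝ[X]} (hdeg : p.natDegree ≤ m + 1) (h1 : p.eval 1 = 1) :
    ngObj A b m prev (K + m) (fun i => -p.coeff (m - i)) = ‖mulVecE (aeval (1 - A) p) r‖ := by
  have hdeg' : p.natDegree < m + 2 := by omega
  have hcoeff : ∑ s ∈ range (m + 2), p.coeff s = 1 := by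
    simpa [h1] using (eval_eq_sum_range' hdeg' (1 : ℝ)).symm
  have hfp : res A b (fp A b (prev (K + m))) = mulVecE ((1 - A) ^ (m + 1)) r := by
    rw [res_fp, hres m le_rfl, ← mulVecE_mul, ← pow_succ']
  have hprev : ∀ i : Fin (m + 1), res A b (prev (K + m - i)) = mulVecE ((1 - A) ^ (m - i)) r :=
    fun i => by rw [Nat.add_sub_assoc (by omega), hres _ (Nat.sub_le _ _)]
  rw [ngObj, hfp, mulVecE_aeval_eq_sum_range hdeg']
  simp_rw [hprev]
  rw [add_sum_smul_sub_eq_sum_range (fun s => mulVecE ((1 - A) ^ s) r) p.coeff m hcoeff]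

variable {m : ℕ} {u : ℕ → EuclideanSpace ℝ (Fin n)}

lemma aNGMRES.eq_iterate_fp (hu : aNGMRES A b m (m + 1) u) {K : ℕ} (hK : m + 1 ∣ K) :
    ∀ i ≤ m, u (K + i) = (fp A b)^[i] (u K)
  | 0, _ => rfl
  | i + 1, hi => by
    have hnd : ¬ m + 1 ∣ K + (i + 1) := fun hd => by
      have := Nat.le_of_dvd (by omega) ((Nat.dvd_add_right hK).1 hd)
      omega
    rw [(hu _ (by omega)).1 hnd, ← add_assoc, Nat.add_sub_cancel, Function.iterate_succ_apply',
      aNGMRES.eq_iterate_fp hu hK i (by omega)]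

lemma aNGMRES.ngmresStep (hu : aNGMRES A b m (m + 1) u) (j : ℕ) :
    NGMRESStep A b m u (j * (m + 1) + m) (u ((j + 1) * (m + 1))) := by
  have hstep :=
    (hu ((j + 1) * (m + 1)) (Nat.one_le_iff_ne_zero.2 (by positivity))).2 (dvd_mul_left _ _)
  have hk : (j + 1) * (m + 1) - 1 = j * (m + 1) + m := by rw [add_one_mul]; omega
  have hmk : (min (m : ℕ∞) (((j + 1) * (m + 1) : ℕ) - 1)).toNat = m := by
    rw [min_eq_left (by norm_cast; omega), ENat.toNat_natCast]
  rwa [hmk, hk] at hstep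

theorem aNGMRES.norm_res_le_norm_mulVecE_aeval (hu : aNGMRES A b m (m + 1) u) (j : ℕ)
    {p : ℝ[X]} (hdeg : p.natDegree ≤ m + 1) (h1 : p.eval 1 = 1) :
    ‖res A b (u ((j + 1) * (m + 1)))‖ ≤
      ‖mulVecE (aeval (1 - A) p) (res A b (u (j * (m + 1))))‖ := by
  have hres : ∀ i ≤ m, res A b (u (j * (m + 1) + i)) =
      mulVecE ((1 - A) ^ i) (res A b (u (j * (m + 1)))) := fun i hi => by
    rw [hu.eq_iterate_fp (dvd_mul_left _ _) i hi, res_iterate_fp]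
  rw [← ngObj_eq_norm_mulVecE_aeval hres hdeg h1]
  exact (hu.ngmresStep j).norm_res_le A b _

end Iterates

section Spectral

variable {n : ℕ}

lemma sSup_image_abs_eval_nonneg (p : ℝ[X]) (S : Set ℝ) :
    0 ≤ sSup ((fun x => |p.eval x|) '' S) :=
  Real.sSup_nonneg <| by rintro _ ⟨x, -, rfl⟩; positivity

open scoped Matrix.Norms.L2Operator in
theorem Matrix.IsHermitian.norm_aeval_le {M : Matrix (Fin n) (Fin n) ℝ} (hM : M.IsHermitian)
    (p : ℝ[X]) {c : ℝ} (hc : 0 ≤ c) (h : ∀ x ∈ spectrum ℝ M, |p.eval x| ≤ c) :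
    ‖aeval M p‖ ≤ c := by
  rw [← cfc_polynomial p M hM.isSelfAdjoint, hM.cfc_eq, Matrix.IsHermitian.cfc,
    Unitary.conjStarAlgAut_apply, ← Unitary.coe_star, CStarRing.norm_mul_coe_unitary,
    CStarRing.norm_coe_unitary_mul, Matrix.l2_opNorm_diagonal]
  refine (pi_norm_le_iff_of_nonneg hc).2 fun i => ?_
  simpa using h _ (hM.eigenvalues_mem_spectrum_real i)

open scoped Matrix.Norms.L2Operator in
theorem Matrix.IsHermitian.norm_mulVecE_aeval_le {M : Matrix (Fin n) (Fin n) ℝ}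
    (hM : M.IsHermitian) (p : ℝ[X]) (r : EuclideanSpace ℝ (Fin n)) :
    ‖mulVecE (aeval M p) r‖ ≤ sSup ((fun x => |p.eval x|) '' spectrum ℝ M) * ‖r‖ := by
  have hbdd : BddAbove ((fun x => |p.eval x|) '' spectrum ℝ M) :=
    (Matrix.finite_real_spectrum.image _).bddAbove
  have hnorm : ‖aeval M p‖ ≤ sSup ((fun x => |p.eval x|) '' spectrum ℝ M) :=
    hM.norm_aeval_le p (sSup_image_abs_eval_nonneg p _)
      fun x hx => le_csSup hbdd ⟨x, hx, rfl⟩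
  exact ((toEuclideanCLM (𝕜 := ℝ) (aeval M p)).le_opNorm r).trans
    (mul_le_mul_of_nonneg_right hnorm (norm_nonneg r))

lemma chiSp_nonneg (M : Matrix (Fin n) (Fin n) ℝ) (s : ℕ) : 0 ≤ chiSp M s :=
  Real.sInf_nonneg <| by
    rintro _ ⟨p, -, -, rfl⟩
    exact sSup_image_abs_eval_nonneg p _

lemma le_chiSp_mul {M : Matrix (Fin n) (Fin n) ℝ} {s : ℕ} {x y : ℝ} (hy : 0 ≤ y)
    (h : ∀ p : ℝ[X], p.natDegree ≤ s → p.eval 1 = 1 →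
      x ≤ sSup ((fun x => |p.eval x|) '' spectrum ℝ M) * y) :
    x ≤ chiSp M s * y := by
  rw [chiSp, mul_comm, ← smul_eq_mul, ← Real.sInf_smul_of_nonneg hy]
  refine le_csInf (Set.Nonempty.smul_set ⟨_, 1, by simp, by simp, rfl⟩) ?_
  rintro _ ⟨_, ⟨p, hdeg, h1, rfl⟩, rfl⟩
  simpa only [smul_eq_mul, mul_comm y] using h p hdeg h1

lemma chiSp_le {M : Matrix (Fin n) (Fin n) ℝ} {s : ℕ} {c : ℝ} (hM : (spectrum ℝ M).Nonempty)
    {p : ℝ[X]} (hdeg : p.natDegree ≤ s) (h1 : p.eval 1 = 1)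
    (hp : ∀ x ∈ spectrum ℝ M, |p.eval x| ≤ c) :
    chiSp M s ≤ c := by
  have hbdd : BddBelow {t : ℝ | ∃ q : ℝ[X], q.natDegree ≤ s ∧ q.eval 1 = 1 ∧
      t = sSup ((fun x => |q.eval x|) '' spectrum ℝ M)} :=
    ⟨0, by rintro _ ⟨q, -, -, rfl⟩; exact sSup_image_abs_eval_nonneg q _⟩
  refine (csInf_le hbdd ⟨p, hdeg, h1, rfl⟩).trans (csSup_le (hM.image _) ?_)
  rintro _ ⟨x, hx, rfl⟩
  exact hp x hx

variable {A : Matrix (Fin n) (Fin n) ℝ} {b : EuclideanSpace ℝ (Fin n)} {m : ℕ}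
  {u : ℕ → EuclideanSpace ℝ (Fin n)}

theorem aNGMRES.norm_res_succ_le_chiSp_mul (hA : A.IsHermitian) (hu : aNGMRES A b m (m + 1) u)
    (j : ℕ) :
    ‖res A b (u ((j + 1) * (m + 1)))‖ ≤ chiSp (1 - A) (m + 1) * ‖res A b (u (j * (m + 1)))‖ :=
  le_chiSp_mul (norm_nonneg _) fun p hdeg h1 =>
    (hu.norm_res_le_norm_mulVecE_aeval j hdeg h1).trans
      ((isHermitian_one.sub hA).norm_mulVecE_aeval_le p _)

theorem aNGMRES.norm_res_le_chiSp_pow_mul (hA : A.IsHermitian) (hu : aNGMRES A b m (m + 1) u) :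
    ∀ j : ℕ, ‖res A b (u (j * (m + 1)))‖ ≤ chiSp (1 - A) (m + 1) ^ j * ‖res A b (u 0)‖
  | 0 => by simp
  | j + 1 => calc
      _ ≤ chiSp (1 - A) (m + 1) * ‖res A b (u (j * (m + 1)))‖ :=
        hu.norm_res_succ_le_chiSp_mul hA j
      _ ≤ chiSp (1 - A) (m + 1) * (chiSp (1 - A) (m + 1) ^ j * ‖res A b (u 0)‖) :=
        mul_le_mul_of_nonneg_left (hu.norm_res_le_chiSp_pow_mul hA j) (chiSp_nonneg _ _)
      _ = chiSp (1 - A) (m + 1) ^ (j + 1) * ‖res A b (u 0)‖ := by ring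

end Spectral

section Chebyshev

open Polynomial.Chebyshev Real

lemma inv_cosh_le_two_mul_exp_neg (x : ℝ) : (cosh x)⁻¹ ≤ 2 * exp (-x) := by
  rw [inv_le_iff_one_le_mul₀ (cosh_pos x), cosh_eq]
  have : exp x * exp (-x) = 1 := by rw [← exp_add, add_neg_cancel, exp_zero]
  nlinarith [exp_pos (-x)]

lemma cosh_log_sqrt_add_one_div_sqrt_sub_one {κ : ℝ} (hκ : 1 < κ) :
    cosh (log ((√κ + 1) / (√κ - 1))) = (κ + 1) / (κ - 1) := by
  set t := √κ
  have ht : 1 < t := Real.lt_sqrt_of_sq_lt (by simpa using hκ)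
  have ht₁ : t - 1 ≠ 0 := by linarith
  have ht₂ : t + 1 ≠ 0 := by linarith
  rw [cosh_log (by apply div_pos <;> linarith), inv_div, ← Real.sq_sqrt (by linarith : 0 ≤ κ),
    show t ^ 2 - 1 = (t - 1) * (t + 1) by ring]
  field_simp
  ring

theorem exists_poly_eval_zero_eq_one_abs_le_of_one_lt {a κ : ℝ} (ha : 0 < a) (hκ : 1 < κ)
    (s : ℕ) : ∃ P : ℝ[X], P.natDegree ≤ s ∧ P.eval 0 = 1 ∧
      ∀ μ ∈ Icc a (κ * a), |P.eval μ| ≤ 2 * ((√κ - 1) / (√κ + 1)) ^ s := by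
  set θ := log ((√κ + 1) / (√κ - 1))
  have hcosh : cosh θ = (κ + 1) / (κ - 1) := cosh_log_sqrt_add_one_div_sqrt_sub_one hκ
  have hexp : exp (-(s * θ)) = ((√κ - 1) / (√κ + 1)) ^ s := by
    have ht : 1 < √κ := Real.lt_sqrt_of_sq_lt (by simpa using hκ)
    rw [Real.exp_neg, exp_nat_mul, exp_log (by apply div_pos <;> linarith), ← inv_pow, inv_div]
  -- the affine change of variables taking `[a, κ a]` onto `[-1, 1]` and `0` to `cosh θ`
  set L : ℝ[X] := C (-2 / ((κ - 1) * a)) * X + C (cosh θ)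
  have hL : ∀ μ ∈ Icc a (κ * a), |L.eval μ| ≤ 1 := by
    rintro μ ⟨hμa, hμb⟩
    have hκa : 0 < (κ - 1) * a := mul_pos (by linarith) ha
    have : L.eval μ = ((κ + 1) * a - 2 * μ) / ((κ - 1) * a) := by
      simp only [L, eval_add, eval_C, eval_mul, eval_X, hcosh]
      field_simp
      ring
    rw [this, abs_div, abs_of_pos hκa, div_le_one hκa, abs_le]
    constructor <;> nlinarith
  have hTcosh : (T ℝ s).eval (cosh θ) = cosh (s * θ) := mod_cast T_real_cosh θ s
  refine ⟨C (cosh (s * θ))⁻¹ * (T ℝ s).comp L, ?_, ?_, fun μ hμ => ?_⟩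
  · refine (natDegree_C_mul_le _ _).trans ?_
    rw [natDegree_comp, natDegree_T, Int.natAbs_natCast]
    exact (Nat.mul_le_mul_left s natDegree_linear_le).trans_eq (mul_one s)
  · simp [L, eval_comp, hTcosh, (cosh_pos _).ne']
  · calc |(C (cosh (s * θ))⁻¹ * (T ℝ s).comp L).eval μ|
        = (cosh (s * θ))⁻¹ * |(T ℝ s).eval (L.eval μ)| := by
          rw [eval_mul, eval_C, eval_comp, abs_mul, abs_of_pos (inv_pos.2 (cosh_pos _))]
      _ ≤ (cosh (s * θ))⁻¹ := by
          simpa using mul_le_mul_of_nonneg_left (abs_eval_T_real_le_one s (hL μ hμ))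
            (inv_pos.2 (cosh_pos (s * θ))).le
      _ ≤ 2 * ((√κ - 1) / (√κ + 1)) ^ s := hexp ▸ inv_cosh_le_two_mul_exp_neg _

theorem exists_poly_eval_zero_eq_one_abs_le {a κ : ℝ} (ha : 0 < a) (hκ : 1 ≤ κ) {s : ℕ}
    (hs : s ≠ 0) : ∃ P : ℝ[X], P.natDegree ≤ s ∧ P.eval 0 = 1 ∧
      ∀ μ ∈ Icc a (κ * a), |P.eval μ| ≤ 2 * ((√κ - 1) / (√κ + 1)) ^ s := by
  rcases hκ.eq_or_lt with rfl | hκ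
  · refine ⟨(C (-a⁻¹) * X + C 1) ^ s, ?_, by simp, fun μ hμ => ?_⟩
    · exact (natDegree_pow_le_of_le s natDegree_linear_le).trans_eq (mul_one s)
    · obtain rfl : μ = a := by rw [one_mul, Set.Icc_self] at hμ; exact hμ
      simp [ha.ne', zero_pow hs]
  · exact exists_poly_eval_zero_eq_one_abs_le_of_one_lt ha hκ s

end Chebyshev

section ConditionNumber

open scoped Pointwise

variable {n : ℕ} {A : Matrix (Fin n) (Fin n) ℝ}

lemma chiSp_one_sub_le_of_abs_le (hA : (spectrum ℝ A).Nonempty) {s : ℕ} {c : ℝ} {P : ℝ[X]}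
    (hdeg : P.natDegree ≤ s) (h0 : P.eval 0 = 1) (hP : ∀ μ ∈ spectrum ℝ A, |P.eval μ| ≤ c) :
    chiSp (1 - A) s ≤ c := by
  have hspec : spectrum ℝ (1 - A) = ({1} : Set ℝ) - spectrum ℝ A := by
    rw [spectrum.singleton_sub_eq, map_one]
  have hdeg' : (P.comp (1 - X)).natDegree ≤ s := by
    rw [natDegree_comp]
    simpa using Nat.mul_le_mul hdeg (natDegree_sub_le_of_le natDegree_one.le natDegree_X_le)
  refine chiSp_le (hspec ▸ (Set.singleton_nonempty (1 : ℝ)).sub hA) hdeg' (by simp [h0]) ?_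
  rintro _ hx
  obtain ⟨_, rfl, μ, hμ, rfl⟩ := hspec ▸ hx
  simpa using hP μ hμ

theorem Matrix.PosDef.chiSp_one_sub_le (hn : 0 < n) (hA : A.PosDef) {s : ℕ} (hs : s ≠ 0) :
    chiSp (1 - A) s ≤
      2 * ((√(sSup (spectrum ℝ A) / sInf (spectrum ℝ A)) - 1) /
        (√(sSup (spectrum ℝ A) / sInf (spectrum ℝ A)) + 1)) ^ s := by
  have : Nonempty (Fin n) := ⟨⟨0, hn⟩⟩
  have hrange := hA.1.spectrum_real_eq_range_eigenvalues
  have hne : (spectrum ℝ A).Nonempty := hrange ▸ range_nonempty _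
  have hfin : (spectrum ℝ A).Finite := Matrix.finite_real_spectrum
  have ha : 0 < sInf (spectrum ℝ A) := by
    have hmem := hne.csInf_mem hfin
    rw [hrange] at hmem ⊢
    obtain ⟨i, hi⟩ := hmem
    exact hi ▸ hA.eigenvalues_pos i
  have hκ : 1 ≤ sSup (spectrum ℝ A) / sInf (spectrum ℝ A) :=
    (one_le_div ha).2 (csInf_le_csSup hne hfin.bddBelow hfin.bddAbove)
  obtain ⟨P, hdeg, h0, hP⟩ := exists_poly_eval_zero_eq_one_abs_le ha hκ hs
  refine chiSp_one_sub_le_of_abs_le hne hdeg h0 fun μ hμ => hP μ ?_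
  rw [div_mul_cancel₀ _ ha.ne']
  exact subset_Icc_csInf_csSup hfin.bddBelow hfin.bddAbove hμ

end ConditionNumber

/-- for A SPD with condition number κ = λ_max(A)/λ_min(A), the
aNGMRES(m, m+1) iterates satisfy
`‖r_{j(m+1)}‖ ≤ χ(m+1)^j ‖r₀‖ ≤ (2((√κ-1)/(√κ+1))^{m+1})^j ‖r₀‖`. -/
theorem stmt_17 {n m : ℕ} (hn : 0 < n) (A : Matrix (Fin n) (Fin n) ℝ)
    (hA : A.PosDef) (b : EuclideanSpace ℝ (Fin n)) (u : ℕ → EuclideanSpace ℝ (Fin n))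
    (hu : aNGMRES A b (m : ℕ∞) (m+1) u)
    (κ : ℝ) (hκ : κ = sSup (spectrum ℝ A) / sInf (spectrum ℝ A)) :
    ∀ j : ℕ, 1 ≤ j →
      ‖res A b (u (j * (m+1)))‖ ≤
        chiSp ((1 : Matrix (Fin n) (Fin n) ℝ) - A) (m+1) ^ j * ‖res A b (u 0)‖ ∧
      chiSp ((1 : Matrix (Fin n) (Fin n) ℝ) - A) (m+1) ^ j * ‖res A b (u 0)‖ ≤
        (2 * ((Real.sqrt κ - 1) / (Real.sqrt κ + 1)) ^ (m+1)) ^ j * ‖res A b (u 0)‖ := by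
  intro j _
  refine ⟨hu.norm_res_le_chiSp_pow_mul hA.1 j, ?_⟩
  have hchi := hA.chiSp_one_sub_le hn m.succ_ne_zero
  rw [← hκ] at hchi
  gcongr
  exact chiSp_nonneg _ _
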